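/- Let $A_1, A_2 \subseteq \mathbb{R}^d$ be sets sandwiched between open sets and their closures, with $\lambda(A_1 \cap A_2) > 0$ and $\lambda(A_2) < \infty$. Suppose for $j \in \{1,2\}$ there exist constants $c_j > 0$ such that for all $V \in W^{1,2}(A_j, \mathbb{R}^{d\times d})$ with $dV = 0$ there exists $R_j \in SO(d)$ with $\|V - R_j\|_{L^2(A_j)} \le c_j \|\mathrm{dist}(V, SO(d))\|_{L^2(A_j)}$. Then with $C = \sqrt{(4\lambda(A_2)/\lambda(A_1\cap A_2) + 2)(c_1^2 + c_2^2)}$, for all $V \in W^{1,2}(A_1 \cup A_2, \mathbb{R}^{d\times d})$ with $dV = 0$ there exists $R \in SO(d)$ with $\|V - R\|_{L^2(A_1 \cup A_2)} \le C \|\mathrm{dist}(V, SO(d))\|_{L^2(A_1 \cup A_2)}$. -/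

import Mathlib

open MeasureTheory
noncomputable section

/-- Vectors in `ℝ^d`. -/
abbrev Rd (d : ℕ) := Fin d → ℝ
/-- Real `d × d` matrices. -/
abbrev Mat (d : ℕ) := Matrix (Fin d) (Fin d) ℝ

/-- The special orthogonal group `SO(d)` as a set of matrices. -/
def SO (d : ℕ) : Set (Mat d) := {R | R * R.transpose = 1 ∧ R.det = 1}

/-- Frobenius norm of a matrix. -/
def fnorm {d : ℕ} (M : Mat d) : ℝ := Real.sqrt (∑ i, ∑ j, (M i j) ^ 2)

/-- Distance of a matrix to `SO(d)` in the Frobenius norm. -/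
def distSO {d : ℕ} (A : Mat d) : ℝ := sInf ((fun Q => fnorm (A - Q)) '' SO d)

/-- Smooth test functions compactly supported in the interior of `A`. -/
def IsTest {d : ℕ} (A : Set (Rd d)) (φ : Rd d → ℝ) : Prop :=
  ContDiff ℝ (⊤ : ℕ∞) φ ∧ HasCompactSupport φ ∧ tsupport φ ⊆ interior A

/-- `k`-th partial derivative of a scalar function. -/
def pd {d : ℕ} (φ : Rd d → ℝ) (k : Fin d) (x : Rd d) : ℝ := fderiv ℝ φ x (Pi.single k 1)

/-- `V ∈ W^{1,2}(A, ℝ^{d×d})`: `V` is in `L²(A)` and each entry has a weak partial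
derivative in `L²(A)`. -/
def MemW12 {d : ℕ} (A : Set (Rd d)) (V : Rd d → Mat d) : Prop :=
  MemLp (fun x => fnorm (V x)) 2 (volume.restrict A) ∧
  ∀ i j k : Fin d, ∃ g : Rd d → ℝ,
    MemLp g 2 (volume.restrict A) ∧
    ∀ φ : Rd d → ℝ, IsTest A φ →
      (∫ x in A, V x i j * pd φ k x) = -∫ x in A, g x * φ x

/-- `dV = 0` in the weak sense: the row-wise exterior derivative vanishes, i.e.
`∂ₖ V_{il} - ∂ₗ V_{ik} = 0` weakly for all `i, k, l`. -/
def ZeroCurl {d : ℕ} (A : Set (Rd d)) (V : Rd d → Mat d) : Prop :=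
  ∀ i k l : Fin d, ∀ φ : Rd d → ℝ, IsTest A φ →
    (∫ x in A, (V x i l * pd φ k x - V x i k * pd φ l x)) = 0

/-- `L²`-norm of a scalar function over a set `A`. -/
def L2norm {d : ℕ} (A : Set (Rd d)) (f : Rd d → ℝ) : ℝ :=
  (∫ x in A, (f x) ^ 2) ^ (1/2 : ℝ)


section AuxiliaryLemmas

open Set

/-- The matrix entries bundled as a point of Euclidean space, so that `fnorm`
becomes the Euclidean norm. -/
def eM {d : ℕ} (M : Mat d) : EuclideanSpace ℝ (Fin d × Fin d) :=
  (WithLp.equiv 2 _).symm (fun p => M p.1 p.2)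

lemma fnorm_eq {d : ℕ} (M : Mat d) : fnorm M = ‖eM M‖ := by
  rw [EuclideanSpace.norm_eq]
  simp [eM, fnorm, Fintype.sum_prod_type, Real.norm_eq_abs, sq_abs]

lemma eM_sub {d : ℕ} (A B : Mat d) : eM (A - B) = eM A - eM B := rfl

lemma fnorm_nonneg {d : ℕ} (M : Mat d) : 0 ≤ fnorm M := Real.sqrt_nonneg _

lemma fnorm_sub_comm {d : ℕ} (A B : Mat d) : fnorm (A - B) = fnorm (B - A) := by
  rw [fnorm_eq, fnorm_eq, eM_sub, eM_sub, norm_sub_rev]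

lemma fnorm_triangle {d : ℕ} (A B C : Mat d) :
    fnorm (A - C) ≤ fnorm (A - B) + fnorm (B - C) := by
  rw [fnorm_eq, fnorm_eq, fnorm_eq, eM_sub, eM_sub, eM_sub]
  exact norm_sub_le_norm_sub_add_norm_sub _ _ _

lemma one_mem_SO (d : ℕ) : (1 : Mat d) ∈ SO d := by
  constructor
  · simp [Matrix.transpose_one]
  · simp

lemma distSO_nonneg {d : ℕ} (A : Mat d) : 0 ≤ distSO A := by
  apply Real.sInf_nonneg
  rintro x ⟨Q, _, rfl⟩; exact fnorm_nonneg _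

lemma distSO_le {d : ℕ} (A Q : Mat d) (hQ : Q ∈ SO d) : distSO A ≤ fnorm (A - Q) := by
  apply csInf_le
  · exact ⟨0, by rintro x ⟨P, _, rfl⟩; exact fnorm_nonneg _⟩
  · exact ⟨Q, hQ, rfl⟩

lemma exists_seq_SO (d : ℕ) : ∃ q : ℕ → Mat d, (∀ n, q n ∈ SO d) ∧
    ∀ A : Mat d, distSO A = ⨅ n, fnorm (A - q n) := by
  set W : Set (EuclideanSpace ℝ (Fin d × Fin d)) := eM '' SO d with hW
  haveI : Nonempty ↥W := ⟨⟨eM 1, mem_image_of_mem _ (one_mem_SO d)⟩⟩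
  obtain ⟨s₀, hs₀c, hs₀d⟩ := TopologicalSpace.exists_countable_dense ↥W
  set T : Set (EuclideanSpace ℝ (Fin d × Fin d)) := insert (eM 1) (Subtype.val '' s₀) with hT
  have hTc : T.Countable := (hs₀c.image _).insert _
  have hTsub : T ⊆ W := by
    rintro x (rfl | ⟨y, _, rfl⟩)
    · exact mem_image_of_mem _ (one_mem_SO d)
    · exact y.2
  have hTcl : ∀ w ∈ W, w ∈ closure T := by
    intro w hw
    have hmem : (⟨w, hw⟩ : ↥W) ∈ closure s₀ := by
      rw [hs₀d.closure_eq]; trivial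
    exact map_mem_closure continuous_subtype_val hmem
      (fun x hx => Set.subset_insert _ _ (mem_image_of_mem _ hx))
  obtain ⟨q', hq'⟩ := hTc.exists_eq_range ⟨eM 1, Set.mem_insert _ _⟩
  have hq'W : ∀ n, q' n ∈ W := fun n => hTsub (hq' ▸ Set.mem_range_self n)
  choose Q hQSO hQe using hq'W
  refine ⟨Q, hQSO, fun A => ?_⟩
  have hbdd : BddBelow (Set.range fun n => fnorm (A - Q n)) :=
    ⟨0, by rintro x ⟨m, rfl⟩; exact fnorm_nonneg _⟩
  refine le_antisymm (le_ciInf fun n => distSO_le A (Q n) (hQSO n)) ?_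
  rw [distSO]
  refine le_csInf ⟨fnorm (A - 1), ⟨1, one_mem_SO d, rfl⟩⟩ ?_
  rintro b ⟨P, hP, rfl⟩
  apply le_of_forall_pos_le_add
  intro ε hε
  obtain ⟨y, hyT, hy⟩ := (Metric.mem_closure_iff.mp (hTcl (eM P) (mem_image_of_mem _ hP))) ε hε
  obtain ⟨n, rfl⟩ : ∃ n, q' n = y := by
    have : y ∈ Set.range q' := hq' ▸ hyT
    obtain ⟨n, hn⟩ := this
    exact ⟨n, hn⟩
  have hfb : fnorm (P - Q n) < ε := by
    rw [fnorm_eq, eM_sub, hQe n, ← dist_eq_norm]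
    exact hy
  calc (⨅ n, fnorm (A - Q n)) ≤ fnorm (A - Q n) := ciInf_le hbdd n
    _ ≤ fnorm (A - P) + fnorm (P - Q n) := fnorm_triangle _ _ _
    _ ≤ fnorm (A - P) + ε := by linarith

lemma aesm_distSO {d : ℕ} {μ : Measure (Rd d)} {V : Rd d → Mat d}
    (h : ∀ Q ∈ SO d, AEStronglyMeasurable (fun x => fnorm (V x - Q)) μ) :
    AEStronglyMeasurable (fun x => distSO (V x)) μ := by
  obtain ⟨q, hqSO, hkey⟩ := exists_seq_SO d
  have heq : (fun x => distSO (V x)) = fun x => ⨅ n, fnorm (V x - q n) :=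
    funext fun x => hkey (V x)
  rw [heq]
  exact (AEMeasurable.iInf (fun n => (h (q n) (hqSO n)).aemeasurable)).aestronglyMeasurable

lemma integral_congr_of_zero_off {d : ℕ} (A B : Set (Rd d)) (hAB : A ⊆ B) (f : Rd d → ℝ)
    (h0 : ∀ x ∉ A, f x = 0) : (∫ x in A, f x) = ∫ x in B, f x := by
  rw [setIntegral_eq_integral_of_forall_compl_eq_zero h0,
      setIntegral_eq_integral_of_forall_compl_eq_zero (fun x hx => h0 x (fun hA => hx (hAB hA)))]

lemma pd_zero_of_nmem {d : ℕ} (φ : Rd d → ℝ) (k : Fin d) (x : Rd d)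
    (hx : x ∉ tsupport φ) : pd φ k x = 0 := by
  have h : fderiv ℝ φ x = 0 :=
    image_eq_zero_of_notMem_tsupport (fun h => hx (tsupport_fderiv_subset ℝ h))
  rw [pd, h]; rfl

lemma isTest_mono {d : ℕ} {A B : Set (Rd d)} (hAB : A ⊆ B) {φ : Rd d → ℝ}
    (h : IsTest A φ) : IsTest B φ :=
  ⟨h.1, h.2.1, h.2.2.trans (interior_mono hAB)⟩

lemma memW12_mono {d : ℕ} {A B : Set (Rd d)} (hAB : A ⊆ B) {V : Rd d → Mat d}
    (h : MemW12 B V) : MemW12 A V := by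
  constructor
  · exact h.1.mono_measure (Measure.restrict_mono hAB le_rfl)
  · intro i j k
    obtain ⟨g, hg, hgw⟩ := h.2 i j k
    refine ⟨g, hg.mono_measure (Measure.restrict_mono hAB le_rfl), ?_⟩
    intro φ hφ
    have hnot : ∀ x ∉ A, x ∉ tsupport φ := fun x hx ht => hx (interior_subset (hφ.2.2 ht))
    rw [integral_congr_of_zero_off A B hAB _
        (fun x hx => by show V x i j * pd φ k x = 0
                        rw [pd_zero_of_nmem φ k x (hnot x hx), mul_zero]),
      integral_congr_of_zero_off A B hAB (fun x => g x * φ x)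
        (fun x hx => by show g x * φ x = 0
                        rw [image_eq_zero_of_notMem_tsupport (hnot x hx), mul_zero])]
    exact hgw φ (isTest_mono hAB hφ)

lemma zeroCurl_mono {d : ℕ} {A B : Set (Rd d)} (hAB : A ⊆ B) {V : Rd d → Mat d}
    (h : ZeroCurl B V) : ZeroCurl A V := by
  intro i k l φ hφ
  have hnot : ∀ x ∉ A, x ∉ tsupport φ := fun x hx ht => hx (interior_subset (hφ.2.2 ht))
  rw [integral_congr_of_zero_off A B hAB _
      (fun x hx => by show V x i l * pd φ k x - V x i k * pd φ l x = 0
                      rw [pd_zero_of_nmem φ k x (hnot x hx), pd_zero_of_nmem φ l x (hnot x hx),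
        mul_zero, mul_zero, sub_zero])]
  exact h i k l φ (isTest_mono hAB hφ)

end AuxiliaryLemmas

set_option maxHeartbeats 1000000 in
open Set in
/-- covering lemma for the rigidity estimate. -/
theorem stmt0 (d : ℕ) (A1 A2 : Set (Rd d))
    (hA1 : ∃ B : Set (Rd d), IsOpen B ∧ B ⊆ A1 ∧ A1 ⊆ closure B)
    (hA2 : ∃ B : Set (Rd d), IsOpen B ∧ B ⊆ A2 ∧ A2 ⊆ closure B)
    (hpos : 0 < volume (A1 ∩ A2)) (hfin : volume A2 < ⊤)
    (c1 c2 : ℝ) (hc1 : 0 < c1) (hc2 : 0 < c2)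
    (h1 : ∀ V : Rd d → Mat d, MemW12 A1 V → ZeroCurl A1 V →
      ∃ R ∈ SO d, L2norm A1 (fun x => fnorm (V x - R)) ≤
        c1 * L2norm A1 (fun x => distSO (V x)))
    (h2 : ∀ V : Rd d → Mat d, MemW12 A2 V → ZeroCurl A2 V →
      ∃ R ∈ SO d, L2norm A2 (fun x => fnorm (V x - R)) ≤
        c2 * L2norm A2 (fun x => distSO (V x))) :
    ∀ V : Rd d → Mat d, MemW12 (A1 ∪ A2) V → ZeroCurl (A1 ∪ A2) V →
      ∃ R ∈ SO d, L2norm (A1 ∪ A2) (fun x => fnorm (V x - R)) ≤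
        Real.sqrt ((4 * (volume A2).toReal / (volume (A1 ∩ A2)).toReal + 2) *
            (c1 ^ 2 + c2 ^ 2)) *
          L2norm (A1 ∪ A2) (fun x => distSO (V x)) := by

  intro V hW hC
  have hL2 : ∀ (A : Set (Rd d)) (f : Rd d → ℝ),
      L2norm A f = Real.sqrt (∫ x in A, (f x)^2) := by
    intro A f; unfold L2norm; exact (Real.sqrt_eq_rpow _).symm
  have hRHSnn : ∀ K : ℝ, 0 ≤ Real.sqrt K * L2norm (A1 ∪ A2) (fun x => distSO (V x)) := by
    intro K
    rw [hL2]
    exact mul_nonneg (Real.sqrt_nonneg _) (Real.sqrt_nonneg _)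
  by_cases hall : ∀ Q ∈ SO d,
      AEStronglyMeasurable (fun x => fnorm (V x - Q)) (volume.restrict (A1 ∪ A2))
  case neg =>
    push_neg at hall
    obtain ⟨Q, hQSO, hQm⟩ := hall
    refine ⟨Q, hQSO, ?_⟩
    have hnint : ¬ Integrable (fun x => fnorm (V x - Q)^2) (volume.restrict (A1 ∪ A2)) := by
      intro hint
      apply hQm
      have heq : (fun x => fnorm (V x - Q)) = fun x => Real.sqrt (fnorm (V x - Q)^2) :=
        funext fun x => (Real.sqrt_sq (fnorm_nonneg _)).symm
      rw [heq]
      exact Real.continuous_sqrt.comp_aestronglyMeasurable hint.1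
    rw [hL2, integral_undef hnint, Real.sqrt_zero]
    exact hRHSnn _
  case pos =>
  have hsub1 : A1 ⊆ A1 ∪ A2 := subset_union_left
  have hsub2 : A2 ⊆ A1 ∪ A2 := subset_union_right
  have hsubs1 : A1 ∩ A2 ⊆ A1 := inter_subset_left
  have hsubs2 : A1 ∩ A2 ⊆ A2 := inter_subset_right
  obtain ⟨R1, hR1SO, hR1⟩ := h1 V (memW12_mono hsub1 hW) (zeroCurl_mono hsub1 hC)
  obtain ⟨R2, hR2SO, hR2⟩ := h2 V (memW12_mono hsub2 hW) (zeroCurl_mono hsub2 hC)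
  by_cases hI1 : Integrable (fun x => fnorm (V x - R1)^2) (volume.restrict (A1 ∪ A2))
  swap
  · refine ⟨R1, hR1SO, ?_⟩
    rw [hL2, integral_undef hI1, Real.sqrt_zero]
    exact hRHSnn _
  by_cases hI2 : Integrable (fun x => fnorm (V x - R2)^2) (volume.restrict (A1 ∪ A2))
  swap
  · refine ⟨R2, hR2SO, ?_⟩
    rw [hL2, integral_undef hI2, Real.sqrt_zero]
    exact hRHSnn _
  -- main case
  refine ⟨R1, hR1SO, ?_⟩
  set f1 : Rd d → ℝ := fun x => fnorm (V x - R1) with hf1def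
  set f2 : Rd d → ℝ := fun x => fnorm (V x - R2) with hf2def
  set D : Rd d → ℝ := fun x => distSO (V x) with hDdef
  have hf1nn : ∀ x, 0 ≤ f1 x := fun x => fnorm_nonneg _
  have hf2nn : ∀ x, 0 ≤ f2 x := fun x => fnorm_nonneg _
  have hDnn : ∀ x, 0 ≤ D x := fun x => distSO_nonneg _
  have hD_le1 : ∀ x, D x ≤ f1 x := fun x => distSO_le _ _ hR1SO
  have hDm : AEStronglyMeasurable D (volume.restrict (A1 ∪ A2)) := aesm_distSO hall
  have hDint : Integrable (fun x => D x ^ 2) (volume.restrict (A1 ∪ A2)) := by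
    refine Integrable.mono' hI1 ((continuous_pow 2).comp_aestronglyMeasurable hDm)
      (Filter.Eventually.of_forall fun x => ?_)
    rw [Real.norm_eq_abs, abs_of_nonneg (sq_nonneg _)]
    exact pow_le_pow_left₀ (hDnn x) (hD_le1 x) 2
  -- restrictions of integrability
  have hI1A1 : IntegrableOn (fun x => f1 x ^ 2) A1 volume := IntegrableOn.mono_set hI1 hsub1
  have hI1A2 : IntegrableOn (fun x => f1 x ^ 2) A2 volume := IntegrableOn.mono_set hI1 hsub2
  have hI1s : IntegrableOn (fun x => f1 x ^ 2) (A1 ∩ A2) volume :=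
    IntegrableOn.mono_set hI1 (hsubs1.trans hsub1)
  have hI2A2 : IntegrableOn (fun x => f2 x ^ 2) A2 volume := IntegrableOn.mono_set hI2 hsub2
  have hI2s : IntegrableOn (fun x => f2 x ^ 2) (A1 ∩ A2) volume :=
    IntegrableOn.mono_set hI2 (hsubs1.trans hsub1)
  have hDA1 : IntegrableOn (fun x => D x ^ 2) A1 volume := IntegrableOn.mono_set hDint hsub1
  have hDA2 : IntegrableOn (fun x => D x ^ 2) A2 volume := IntegrableOn.mono_set hDint hsub2
  -- measure numbers
  set a : ℝ := (volume A2).toReal with hadef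
  set m : ℝ := (volume (A1 ∩ A2)).toReal with hmdef
  have hsfin : volume (A1 ∩ A2) < ⊤ := (measure_mono hsubs2).trans_lt hfin
  have hm : 0 < m := ENNReal.toReal_pos hpos.ne' hsfin.ne
  have ha : 0 ≤ a := ENNReal.toReal_nonneg
  -- integral abbreviations
  set I1 : ℝ := ∫ x in A1, f1 x ^ 2 with hI1def
  set I2 : ℝ := ∫ x in A2, f2 x ^ 2 with hI2def
  set I12 : ℝ := ∫ x in A2, f1 x ^ 2 with hI12def
  set J1 : ℝ := ∫ x in A1, D x ^ 2 with hJ1def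
  set J2 : ℝ := ∫ x in A2, D x ^ 2 with hJ2def
  set Ju : ℝ := ∫ x in A1 ∪ A2, D x ^ 2 with hJudef
  set L : ℝ := ∫ x in A1 ∪ A2, f1 x ^ 2 with hLdef
  have hI1nn : 0 ≤ I1 := integral_nonneg fun x => sq_nonneg _
  have hI2nn : 0 ≤ I2 := integral_nonneg fun x => sq_nonneg _
  have hLnn : 0 ≤ L := integral_nonneg fun x => sq_nonneg _
  have hJunn : 0 ≤ Ju := integral_nonneg fun x => sq_nonneg _
  -- from h1, h2
  have hI1le : I1 ≤ c1 ^ 2 * J1 := by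
    have h := hR1
    rw [hL2, hL2] at h
    have h' := pow_le_pow_left₀ (Real.sqrt_nonneg I1) h 2
    rw [Real.sq_sqrt hI1nn, mul_pow, Real.sq_sqrt (integral_nonneg fun x => sq_nonneg _)] at h'
    exact h'
  have hI2le : I2 ≤ c2 ^ 2 * J2 := by
    have h := hR2
    rw [hL2, hL2] at h
    have h' := pow_le_pow_left₀ (Real.sqrt_nonneg I2) h 2
    rw [Real.sq_sqrt hI2nn, mul_pow, Real.sq_sqrt (integral_nonneg fun x => sq_nonneg _)] at h'
    exact h'
  -- monotone set inequalities for D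
  have hJ1le : J1 ≤ Ju := setIntegral_mono_set hDint
    (Filter.Eventually.of_forall fun x => sq_nonneg _) (HasSubset.Subset.eventuallyLE hsub1)
  have hJ2le : J2 ≤ Ju := setIntegral_mono_set hDint
    (Filter.Eventually.of_forall fun x => sq_nonneg _) (HasSubset.Subset.eventuallyLE hsub2)
  -- split of L
  have hLsplit : L ≤ I1 + I12 := by
    have hle : volume.restrict (A1 ∪ A2) ≤ volume.restrict A1 + volume.restrict A2 :=
      Measure.restrict_union_le _ _
    have hint : Integrable (fun x => f1 x ^ 2) (volume.restrict A1 + volume.restrict A2) :=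
      Integrable.add_measure hI1A1 hI1A2
    calc L ≤ ∫ x, f1 x ^ 2 ∂(volume.restrict A1 + volume.restrict A2) :=
          integral_mono_measure hle (Filter.Eventually.of_forall fun x => sq_nonneg _) hint
      _ = I1 + I12 := integral_add_measure hI1A1 hI1A2
  -- rigidity of the two rotations
  set r : ℝ := fnorm (R1 - R2) with hrdef
  have hrnn : 0 ≤ r := fnorm_nonneg _
  have hr : r ^ 2 * m ≤ 2 * I1 + 2 * I2 := by
    have hptw : ∀ x, r ^ 2 ≤ 2 * f1 x ^ 2 + 2 * f2 x ^ 2 := by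
      intro x
      have ht : fnorm (R1 - R2) ≤ fnorm (R1 - V x) + fnorm (V x - R2) := fnorm_triangle _ _ _
      rw [fnorm_sub_comm R1 (V x)] at ht
      have ht' : r ≤ f1 x + f2 x := ht
      nlinarith [ht', hf1nn x, hf2nn x, hrnn, sq_nonneg (f1 x - f2 x), sq_nonneg (f1 x + f2 x)]
    have e0 : ∫ _x in A1 ∩ A2, r ^ 2 = r ^ 2 * m := by
      rw [setIntegral_const, smul_eq_mul]; rw [mul_comm]; rfl
    have e1 : (∫ x in A1 ∩ A2, f1 x ^ 2) ≤ I1 := setIntegral_mono_set hI1A1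
      (Filter.Eventually.of_forall fun x => sq_nonneg _) (HasSubset.Subset.eventuallyLE hsubs1)
    have e2 : (∫ x in A1 ∩ A2, f2 x ^ 2) ≤ I2 := setIntegral_mono_set hI2A2
      (Filter.Eventually.of_forall fun x => sq_nonneg _) (HasSubset.Subset.eventuallyLE hsubs2)
    have e3 : (∫ _x in A1 ∩ A2, r ^ 2) ≤
        ∫ x in A1 ∩ A2, (2 * f1 x ^ 2 + 2 * f2 x ^ 2) := by
      refine integral_mono (integrableOn_const hsfin.ne)
        ((hI1s.const_mul 2).add (hI2s.const_mul 2)) hptw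
    rw [e0] at e3
    rw [integral_add (hI1s.const_mul 2) (hI2s.const_mul 2),
      integral_const_mul, integral_const_mul] at e3
    linarith
  -- comparison on A2
  have hI12le : I12 ≤ 2 * I2 + 2 * (r ^ 2 * a) := by
    have hptw : ∀ x, f1 x ^ 2 ≤ 2 * f2 x ^ 2 + 2 * r ^ 2 := by
      intro x
      have ht : fnorm (V x - R1) ≤ fnorm (V x - R2) + fnorm (R2 - R1) := fnorm_triangle _ _ _
      rw [fnorm_sub_comm R2 R1] at ht
      have ht' : f1 x ≤ f2 x + r := ht
      nlinarith [ht', hf1nn x, hf2nn x, hrnn, sq_nonneg (f2 x - r), sq_nonneg (f2 x + r)]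
    have e3 : I12 ≤ ∫ x in A2, (2 * f2 x ^ 2 + 2 * r ^ 2) := by
      refine integral_mono hI1A2
        ((hI2A2.const_mul 2).add ((integrableOn_const hfin.ne : IntegrableOn (fun _ => r ^ 2) A2 volume).const_mul 2)) hptw
    rw [integral_add (hI2A2.const_mul 2) ((integrableOn_const hfin.ne : IntegrableOn (fun _ => r ^ 2) A2 volume).const_mul 2),
      integral_const_mul, integral_const_mul, setIntegral_const, smul_eq_mul] at e3
    rw [show volume.real A2 = a from rfl] at e3
    nlinarith [e3]
  -- combine everything
  have hfinal : L ≤ ((4 * a / m + 2) * (c1 ^ 2 + c2 ^ 2)) * Ju := by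
    set X : ℝ := a / m with hXdef
    have hXnn : 0 ≤ X := div_nonneg ha hm.le
    have hra : r ^ 2 * a ≤ X * (2 * I1 + 2 * I2) := by
      have h' := mul_le_mul_of_nonneg_left hr hXnn
      have heq : X * (r ^ 2 * m) = r ^ 2 * a := by
        rw [hXdef]; field_simp
      linarith
    have hs1 : I1 ≤ c1 ^ 2 * Ju :=
      hI1le.trans (mul_le_mul_of_nonneg_left hJ1le (sq_nonneg c1))
    have hs2 : I2 ≤ c2 ^ 2 * Ju :=
      hI2le.trans (mul_le_mul_of_nonneg_left hJ2le (sq_nonneg c2))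
    have hXsum : X * (2 * I1 + 2 * I2) ≤ X * (2 * (c1 ^ 2 * Ju) + 2 * (c2 ^ 2 * Ju)) :=
      mul_le_mul_of_nonneg_left (by linarith) hXnn
    have hgoal : 4 * a / m + 2 = 4 * X + 2 := by rw [hXdef]; ring
    rw [hgoal]
    have hc1Ju : 0 ≤ c1 ^ 2 * Ju := mul_nonneg (sq_nonneg _) hJunn
    have hc2Ju : 0 ≤ c2 ^ 2 * Ju := mul_nonneg (sq_nonneg _) hJunn
    nlinarith [hLsplit, hI12le, hra, hXsum, hs1, hs2, hc1Ju, hc2Ju, hI1nn, hI2nn]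
  have hKnn : 0 ≤ (4 * a / m + 2) * (c1 ^ 2 + c2 ^ 2) := by
    have : 0 ≤ 4 * a / m := div_nonneg (by linarith) hm.le
    nlinarith [sq_nonneg c1, sq_nonneg c2]
  rw [hL2, hL2]
  calc Real.sqrt L ≤ Real.sqrt (((4 * a / m + 2) * (c1 ^ 2 + c2 ^ 2)) * Ju) :=
        Real.sqrt_le_sqrt hfinal
    _ = Real.sqrt ((4 * a / m + 2) * (c1 ^ 2 + c2 ^ 2)) * Real.sqrt Ju :=
        Real.sqrt_mul hKnn _
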